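/- arXiv:1007.1443 — 5 statements merged into one kernel-verified Lean document; each statement's English description precedes it below -/
import Mathlib

section
/- Suppose F, H, B : ℝ → Matrix (Fin 2) (Fin 2) ℝ are differentiable and satisfy for all t: F'(t) = 2H(t), H'(t) = 2λ(t)²·F(t) − 2H(t) − μ(t)·B(t), B'(t) = μ(t)·H(t) − 2B(t), with F(0) = M₂, H(0) = −M₃, B(0) = M₁. Then F(t)² = −I₂ for every t ∈ ℝ. -/
open Matrix

/-- `M₁ = !![1, 0; 0, -1]` -/
def M1 : Matrix (Fin 2) (Fin 2) ℝ := !![1, 0; 0, -1]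
/-- `M₂ = !![0, 1; -1, 0]` -/
def M2 : Matrix (Fin 2) (Fin 2) ℝ := !![0, 1; -1, 0]
/-- `M₃ = !![0, 1; 1, 0]` -/
def M3 : Matrix (Fin 2) (Fin 2) ℝ := !![0, 1; 1, 0]

/-- The function `λ(t) = e^(-2t)`. -/
noncomputable def lam (t : ℝ) : ℝ := Real.exp (-2 * t)

/-!
The six quadratic expressions `F² + 1`, `FH + HF`, `FB + BF`, `H² - λ²`, `HB + BH`, `B² - λ²`
satisfy, because `(λ²)' = -4λ²`, a closed linear system of ODEs whose coefficients are continuous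
in `t`. They all vanish at `t = 0`, so by Grönwall's inequality they vanish identically;
in particular `F² = -1`.
-/

section Gronwall

variable {E : Type*} [NormedAddCommGroup E] [NormedSpace ℝ E] {y y' : ℝ → E} {K : ℝ → ℝ} {a : ℝ}

theorem eq_zero_of_norm_deriv_le_mul_norm_of_le (hK : Continuous K)
    (hy : ∀ t, HasDerivAt y (y' t) t)
    (bound : ∀ t, ‖y' t‖ ≤ K t * ‖y t‖) (ha : y a = 0) {t : ℝ} (ht : a ≤ t) : y t = 0 := by
  obtain ⟨C, hC⟩ :=
    isCompact_Icc.exists_bound_of_continuousOn (hK.continuousOn (s := Set.Icc a t))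
  refine eq_zero_of_abs_deriv_le_mul_abs_self_of_eq_zero_right (K := C)
    (fun s _ => (hy s).continuousAt.continuousWithinAt) (fun s _ => (hy s).hasDerivWithinAt) ha
    (fun s hs => ?_) t ⟨ht, le_rfl⟩
  calc ‖y' s‖ ≤ K s * ‖y s‖ := bound s
    _ ≤ C * ‖y s‖ := by
      gcongr
      exact (le_abs_self _).trans (hC s (Set.Ico_subset_Icc_self hs))

theorem eq_zero_of_norm_deriv_le_mul_norm (hK : Continuous K) (hy : ∀ t, HasDerivAt y (y' t) t)
    (bound : ∀ t, ‖y' t‖ ≤ K t * ‖y t‖) (ha : y a = 0) (t : ℝ) : y t = 0 := by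
  rcases le_total a t with hat | hta
  · exact eq_zero_of_norm_deriv_le_mul_norm_of_le hK hy bound ha hat
  · have hy_neg (s : ℝ) : HasDerivAt (fun s => y (-s)) (-y' (-s)) s := by
      simpa [Function.comp_def] using (hy (-s)).scomp s (hasDerivAt_neg s)
    simpa using eq_zero_of_norm_deriv_le_mul_norm_of_le (hK.comp continuous_neg) hy_neg
      (fun s => by simpa using bound (-s)) (by simpa using ha) (neg_le_neg hta)

theorem linear_ODE_solution_eq_zero {ι : Type*} [Fintype ι] {y : ℝ → ι → E}
    {A : ℝ → Matrix ι ι ℝ} (hA : Continuous A)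
    (hy : ∀ t, HasDerivAt y (fun k => ∑ m, A t k m • y t m) t) (ha : y a = 0) (t : ℝ) :
    y t = 0 := by
  refine eq_zero_of_norm_deriv_le_mul_norm (K := fun t => ∑ k, ∑ m, |A t k m|)
    (by fun_prop) hy (fun t => ?_) ha t
  refine (pi_norm_le_iff_of_nonneg (by positivity)).2 fun k => ?_
  calc ‖∑ m, A t k m • y t m‖ ≤ ∑ m, |A t k m| * ‖y t‖ :=
        norm_sum_le_of_le _ fun m _ => by
          rw [norm_smul, Real.norm_eq_abs]
          gcongr
          exact norm_le_pi_norm _ _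
    _ = (∑ m, |A t k m|) * ‖y t‖ := (Finset.sum_mul ..).symm
    _ ≤ (∑ k, ∑ m, |A t k m|) * ‖y t‖ := by
      gcongr ?_ * _
      exact Finset.single_le_sum (f := fun k => ∑ m, |A t k m|) (fun _ _ => by positivity)
        (Finset.mem_univ k)

end Gronwall

section QuadraticDefects

-- `HasDerivAt` for matrix-valued maps only sees the product topology; the elementwise norm is
-- opened so that `hasDerivAt_pi` applies in the proofs.
open scoped Matrix.Norms.Elementwise

variable {m n p : Type*} [Fintype n]

theorem Matrix.hasDerivAt_iff {F : ℝ → Matrix m n ℝ} {F' : Matrix m n ℝ} {t : ℝ} :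
    HasDerivAt F F' t ↔ ∀ i j, HasDerivAt (fun s => F s i j) (F' i j) t :=
  hasDerivAt_pi.trans (forall_congr' fun _ => hasDerivAt_pi)

theorem HasDerivAt.matrix_mul [Fintype m] [Fintype p] {F : ℝ → Matrix m n ℝ}
    {G : ℝ → Matrix n p ℝ} {F' : Matrix m n ℝ} {G' : Matrix n p ℝ} {t : ℝ}
    (hF : HasDerivAt F F' t) (hG : HasDerivAt G G' t) :
    HasDerivAt (fun s => F s * G s) (F' * G t + F t * G') t := by
  refine Matrix.hasDerivAt_iff.2 fun i j => ?_
  have := HasDerivAt.fun_sum fun k (_ : k ∈ Finset.univ) =>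
    (Matrix.hasDerivAt_iff.1 hF i k).mul (Matrix.hasDerivAt_iff.1 hG k j)
  simpa [Matrix.mul_apply, Finset.sum_add_distrib] using this

variable [DecidableEq n]

def quadraticDefects (c : ℝ) (F H B : Matrix n n ℝ) : Fin 6 → Matrix n n ℝ :=
  ![F * F + 1, F * H + H * F, F * B + B * F, H * H - c • 1, H * B + B * H, B * B - c • 1]

def defectCoeffs (c μ : ℝ) : Matrix (Fin 6) (Fin 6) ℝ :=
  !![0, 2, 0, 0, 0, 0;
     4 * c, -2, -μ, 4, 0, 0;
     0, μ, -2, 0, 2, 0;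
     0, 2 * c, 0, -4, -μ, 0;
     0, 0, 2 * c, 2 * μ, -4, -(2 * μ);
     0, 0, 0, 0, μ, -4]

theorem continuous_defectCoeffs {c μ : ℝ → ℝ} (hc : Continuous c) (hμ : Continuous μ) :
    Continuous fun t => defectCoeffs (c t) (μ t) := by
  refine continuous_pi fun k => continuous_pi fun m => ?_
  fin_cases k <;> fin_cases m <;>
    simp only [defectCoeffs, Fin.zero_eta, Fin.mk_one, Fin.reduceFinMk, of_apply, cons_val] <;>
    fun_prop

variable {F H B : ℝ → Matrix n n ℝ} {c μ : ℝ → ℝ}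

theorem hasDerivAt_quadraticDefects {t : ℝ} (hF : HasDerivAt F ((2 : ℝ) • H t) t)
    (hH : HasDerivAt H ((2 * c t) • F t - (2 : ℝ) • H t - μ t • B t) t)
    (hB : HasDerivAt B (μ t • H t - (2 : ℝ) • B t) t) (hc : HasDerivAt c (-4 * c t) t) :
    HasDerivAt (fun s => quadraticDefects (c s) (F s) (H s) (B s))
      (fun k => ∑ m, defectCoeffs (c t) (μ t) k m •
        quadraticDefects (c t) (F t) (H t) (B t) m) t := by
  have hc1 := hc.smul_const (1 : Matrix n n ℝ)
  refine hasDerivAt_pi.2 fun k => ?_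
  fin_cases k <;> [
    refine ((hF.matrix_mul hF).add_const 1).congr_deriv ?_;
    refine ((hF.matrix_mul hH).add (hH.matrix_mul hF)).congr_deriv ?_;
    refine ((hF.matrix_mul hB).add (hB.matrix_mul hF)).congr_deriv ?_;
    refine ((hH.matrix_mul hH).sub hc1).congr_deriv ?_;
    refine ((hH.matrix_mul hB).add (hB.matrix_mul hH)).congr_deriv ?_;
    refine ((hB.matrix_mul hB).sub hc1).congr_deriv ?_] <;>
  simp only [quadraticDefects, defectCoeffs, Fin.sum_univ_six, Fin.zero_eta, Fin.mk_one,
    Fin.reduceFinMk, of_apply, cons_val, mul_sub, sub_mul, smul_mul_assoc, mul_smul_comm] <;>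
  module

theorem quadraticDefects_eq_zero (hμ : Continuous μ) (hF : ∀ t, HasDerivAt F ((2 : ℝ) • H t) t)
    (hH : ∀ t, HasDerivAt H ((2 * c t) • F t - (2 : ℝ) • H t - μ t • B t) t)
    (hB : ∀ t, HasDerivAt B (μ t • H t - (2 : ℝ) • B t) t) (hc : ∀ t, HasDerivAt c (-4 * c t) t)
    {a : ℝ} (ha : quadraticDefects (c a) (F a) (H a) (B a) = 0) (t : ℝ) :
    quadraticDefects (c t) (F t) (H t) (B t) = 0 :=
  linear_ODE_solution_eq_zero
    (continuous_defectCoeffs (continuous_iff_continuousAt.2 fun t => (hc t).continuousAt) hμ)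
    (fun t => hasDerivAt_quadraticDefects (hF t) (hH t) (hB t) (hc t)) ha t

end QuadraticDefects

theorem hasDerivAt_lam_sq (t : ℝ) : HasDerivAt (fun s => lam s ^ 2) (-4 * lam t ^ 2) t := by
  have hlam : HasDerivAt lam (lam t * (-2 * 1)) t := ((hasDerivAt_id' t).const_mul (-2)).exp
  exact (hlam.fun_pow 2).congr_deriv (by ring)

theorem quadraticDefects_initial : quadraticDefects 1 M2 (-M3) M1 = 0 := by
  ext k i j
  fin_cases k <;> fin_cases i <;> fin_cases j <;>
    simp [quadraticDefects, M1, M2, M3]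

theorem stmt_1 (μ : ℝ → ℝ) (hμ : Continuous μ)
    (F H B : ℝ → Matrix (Fin 2) (Fin 2) ℝ)
    (hF : ∀ t i j, HasDerivAt (fun s => F s i j) (((2 : ℝ) • H t) i j) t)
    (hH : ∀ t i j, HasDerivAt (fun s => H s i j)
      (((2 * (lam t) ^ 2) • F t - (2 : ℝ) • H t - μ t • B t) i j) t)
    (hB : ∀ t i j, HasDerivAt (fun s => B s i j)
      ((μ t • H t - (2 : ℝ) • B t) i j) t)
    (hF0 : F 0 = M2) (hH0 : H 0 = -M3) (hB0 : B 0 = M1) :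
    ∀ t : ℝ, F t * F t = -(1 : Matrix (Fin 2) (Fin 2) ℝ) := by
  have hinit : quadraticDefects (lam 0 ^ 2) (F 0) (H 0) (B 0) = 0 := by
    simpa [hF0, hH0, hB0, lam] using quadraticDefects_initial
  intro t
  have hY := quadraticDefects_eq_zero hμ (fun t => Matrix.hasDerivAt_iff.2 (hF t))
    (fun t => Matrix.hasDerivAt_iff.2 (hH t)) (fun t => Matrix.hasDerivAt_iff.2 (hB t))
    hasDerivAt_lam_sq hinit t
  exact eq_neg_of_add_eq_zero_left (congrFun hY 0)
end

section
/- Suppose F, H, B : ℝ → Matrix (Fin 2) (Fin 2) ℝ are differentiable and satisfy for all t: F'(t) = 2H(t), H'(t) = 2λ(t)²·F(t) − 2H(t) − μ(t)·B(t), B'(t) = μ(t)·H(t) − 2B(t), with F(0) = M₂, H(0) = −M₃, B(0) = M₁. Then H(t)² = e^(−4t)·I₂ and B(t)² = e^(−4t)·I₂ for every t ∈ ℝ. -/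
open Matrix

/-!
Write the system as `Φ' = A(t) Φ` for the triple `Φ = (F, H, B)`. The traces `v = (tr F, tr H, tr B)`
then satisfy `v' = A v`, and the Gram matrix `G = (tr (X Y))_{X, Y ∈ Φ}` satisfies
`G' = A G + G Aᵀ`. Both are linear ODEs with continuous coefficients, so their solutions are
determined by the initial values. Since `v(0) = 0`, the traces vanish identically; since
`λ² = e^{-4t}`, `diag(-2, 2e^{-4t}, 2e^{-4t})` solves the Gram equation and agrees with `G(0)`,
so `tr (H²) = tr (B²) = 2e^{-4t}`. By Cayley–Hamilton a traceless `2 × 2` matrix `X` satisfies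
`X² = (tr (X²) / 2) • 1`.
-/

theorem ODE_solution_unique_of_continuous_clm {E : Type*} [NormedAddCommGroup E]
    [NormedSpace ℝ E] {L : ℝ → E →L[ℝ] E} (hL : Continuous L) {u v : ℝ → E}
    (hu : ∀ t, HasDerivAt u (L t (u t)) t) (hv : ∀ t, HasDerivAt v (L t (v t)) t)
    (h0 : u 0 = v 0) (t : ℝ) : u t = v t := by
  set R := |t| + 1
  obtain ⟨C, hC⟩ := (isCompact_Icc (a := -R) (b := R)).exists_bound_of_continuousOn
    hL.continuousOn
  have hLip (s : ℝ) (hs : s ∈ Set.Ioo (-R) R) :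
      LipschitzOnWith C.toNNReal (L s) Set.univ := by
    refine ((L s).lipschitz.weaken ?_).lipschitzOnWith
    simpa [← NNReal.coe_le_coe] using
      (hC s (Set.Ioo_subset_Icc_self hs)).trans (le_max_left C 0)
  have hmem (s : ℝ) (hs : |s| < R) : s ∈ Set.Ioo (-R) R := abs_lt.mp hs
  exact ODE_solution_unique_of_mem_Ioo hLip (hmem 0 (by simp [R]; positivity))
    (fun s _ => ⟨hu s, trivial⟩) (fun s _ => ⟨hv s, trivial⟩) h0 (hmem t (lt_add_one _))

section MatrixCalculus

variable {𝕜 : Type*} [NontriviallyNormedField 𝕜] {l m n : Type*} {t : 𝕜}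

theorem hasDerivAt_matrix_mul_apply [Fintype m] {X : 𝕜 → Matrix l m 𝕜}
    {Y : 𝕜 → Matrix m n 𝕜} {X' : Matrix l m 𝕜} {Y' : Matrix m n 𝕜}
    (hX : ∀ i j, HasDerivAt (fun s => X s i j) (X' i j) t)
    (hY : ∀ i j, HasDerivAt (fun s => Y s i j) (Y' i j) t) (i : l) (j : n) :
    HasDerivAt (fun s => (X s * Y s) i j) ((X' * Y t + X t * Y') i j) t := by
  simp only [mul_apply, Matrix.add_apply, ← Finset.sum_add_distrib]
  exact HasDerivAt.fun_sum fun k _ => (hX i k).mul (hY k j)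

theorem hasDerivAt_trace [Fintype n] {X : 𝕜 → Matrix n n 𝕜} {X' : Matrix n n 𝕜}
    (hX : ∀ i j, HasDerivAt (fun s => X s i j) (X' i j) t) :
    HasDerivAt (fun s => (X s).trace) X'.trace t :=
  HasDerivAt.fun_sum fun i _ => hX i i

end MatrixCalculus

section TraceInvariants

variable {R ι n : Type*} [Fintype n]

def traceVec [AddCommMonoid R] (Φ : ι → Matrix n n R) : ι → R :=
  fun a => (Φ a).trace

def traceGram [NonUnitalNonAssocSemiring R] (Φ : ι → Matrix n n R) : Matrix ι ι R :=
  Matrix.of fun a b => (Φ a * Φ b).trace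

end TraceInvariants

section LinearSystem

variable {ι n : Type*} [Fintype ι] [Fintype n] {Φ : ℝ → ι → Matrix n n ℝ}
  {A : ℝ → Matrix ι ι ℝ} {t : ℝ}

theorem hasDerivAt_traceVec
    (hΦ : ∀ a i j, HasDerivAt (fun s => Φ s a i j) ((∑ b, A t a b • Φ t b) i j) t) :
    HasDerivAt (fun s => traceVec (Φ s)) (A t *ᵥ traceVec (Φ t)) t := by
  refine hasDerivAt_pi.2 fun a => (hasDerivAt_trace (hΦ a)).congr_deriv ?_
  simp [traceVec, trace_sum, mulVec, dotProduct]

theorem traceVec_eq_zero_of_hasDerivAt (hA : Continuous A)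
    (hΦ : ∀ t a i j, HasDerivAt (fun s => Φ s a i j) ((∑ b, A t a b • Φ t b) i j) t)
    (h0 : traceVec (Φ 0) = 0) (t : ℝ) : traceVec (Φ t) = 0 := by
  let L t := (mulVecLin (A t)).toContinuousLinearMap
  have hL : Continuous L := continuous_clm_apply.2 fun v => by
    show Continuous fun t => A t *ᵥ v
    fun_prop
  exact ODE_solution_unique_of_continuous_clm hL (fun t => hasDerivAt_traceVec (hΦ t))
    (fun t => (hasDerivAt_const t 0).congr_deriv (mulVec_zero _).symm) h0 t

attribute [local instance] Matrix.normedAddCommGroup Matrix.normedSpace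

theorem hasDerivAt_traceGram
    (hΦ : ∀ a i j, HasDerivAt (fun s => Φ s a i j) ((∑ b, A t a b • Φ t b) i j) t) :
    HasDerivAt (fun s => traceGram (Φ s))
      (A t * traceGram (Φ t) + traceGram (Φ t) * (A t)ᵀ) t := by
  refine hasDerivAt_pi.2 fun a => hasDerivAt_pi.2 fun b =>
    (hasDerivAt_trace (hasDerivAt_matrix_mul_apply (hΦ a) (hΦ b))).congr_deriv ?_
  simp [traceGram, trace_sum, mul_apply, Finset.sum_mul, Finset.mul_sum, mul_comm]

theorem traceGram_eq_of_hasDerivAt (hA : Continuous A)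
    (hΦ : ∀ t a i j, HasDerivAt (fun s => Φ s a i j) ((∑ b, A t a b • Φ t b) i j) t)
    {G : ℝ → Matrix ι ι ℝ} (hG : ∀ t, HasDerivAt G (A t * G t + G t * (A t)ᵀ) t)
    (h0 : traceGram (Φ 0) = G 0) (t : ℝ) : traceGram (Φ t) = G t := by
  let L t := (LinearMap.mulLeft ℝ (A t) + LinearMap.mulRight ℝ (A t)ᵀ).toContinuousLinearMap
  have hL : Continuous L := continuous_clm_apply.2 fun X => by
    show Continuous fun t => A t * X + X * (A t)ᵀ
    fun_prop
  exact ODE_solution_unique_of_continuous_clm hL (fun t => hasDerivAt_traceGram (hΦ t)) hG h0 t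

end LinearSystem

theorem mul_self_eq_smul_one_of_trace_eq_zero {K : Type*} [Field K] [CharZero K]
    {X : Matrix (Fin 2) (Fin 2) K} {c : K} (h1 : X.trace = 0) (h2 : (X * X).trace = 2 * c) :
    X * X = c • 1 := by
  simp only [trace_fin_two, mul_apply, Fin.sum_univ_two] at h1 h2
  ext i j
  fin_cases i <;> fin_cases j <;> simp [mul_apply, Fin.sum_univ_two]
  · linear_combination (1 / 2) * h2 + ((X 0 0 - X 1 1) / 2) * h1
  · linear_combination X 0 1 * h1
  · linear_combination X 1 0 * h1
  · linear_combination (1 / 2) * h2 + ((X 1 1 - X 0 0) / 2) * h1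

theorem lam_sq (t : ℝ) : lam t ^ 2 = Real.exp (-4 * t) := by
  rw [lam, ← Real.exp_nat_mul]
  ring_nf

noncomputable def systemMatrix (μ : ℝ → ℝ) (t : ℝ) : Matrix (Fin 3) (Fin 3) ℝ :=
  !![0, 2, 0; 2 * lam t ^ 2, -2, -μ t; 0, μ t, -2]

theorem continuous_systemMatrix {μ : ℝ → ℝ} (hμ : Continuous μ) :
    Continuous (systemMatrix μ) := by
  refine continuous_pi fun a => continuous_pi fun b => ?_
  fin_cases a <;> fin_cases b <;> simp [systemMatrix, lam] <;> fun_prop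

noncomputable def gramSolution (t : ℝ) : Matrix (Fin 3) (Fin 3) ℝ :=
  diagonal ![-2, 2 * Real.exp (-4 * t), 2 * Real.exp (-4 * t)]

section

attribute [local instance] Matrix.normedAddCommGroup Matrix.normedSpace

theorem hasDerivAt_gramSolution (μ : ℝ → ℝ) (t : ℝ) :
    HasDerivAt gramSolution
      (systemMatrix μ t * gramSolution t + gramSolution t * (systemMatrix μ t)ᵀ) t := by
  have hexp : HasDerivAt (fun s => 2 * Real.exp (-(4 * s))) (-8 * Real.exp (-(4 * t))) t :=
    (((hasDerivAt_id' t).const_mul 4).fun_neg.exp.const_mul 2).congr_deriv (by ring)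
  refine hasDerivAt_pi.2 fun a => hasDerivAt_pi.2 fun b => ?_
  fin_cases a <;> fin_cases b <;>
    simp [gramSolution, systemMatrix, mul_apply, Fin.sum_univ_three, lam_sq, vecMul_diagonal]
  all_goals
    first
    | exact (hasDerivAt_const t _).congr_deriv (by ring)
    | exact hexp.congr_deriv (by ring)

end

theorem stmt_2 (μ : ℝ → ℝ) (hμ : Continuous μ)
    (F H B : ℝ → Matrix (Fin 2) (Fin 2) ℝ)
    (hF : ∀ t i j, HasDerivAt (fun s => F s i j) (((2 : ℝ) • H t) i j) t)
    (hH : ∀ t i j, HasDerivAt (fun s => H s i j)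
      (((2 * (lam t) ^ 2) • F t - (2 : ℝ) • H t - μ t • B t) i j) t)
    (hB : ∀ t i j, HasDerivAt (fun s => B s i j)
      ((μ t • H t - (2 : ℝ) • B t) i j) t)
    (hF0 : F 0 = M2) (hH0 : H 0 = -M3) (hB0 : B 0 = M1) :
    ∀ t : ℝ, H t * H t = Real.exp (-4 * t) • (1 : Matrix (Fin 2) (Fin 2) ℝ) ∧
      B t * B t = Real.exp (-4 * t) • (1 : Matrix (Fin 2) (Fin 2) ℝ) := by
  let Φ : ℝ → Fin 3 → Matrix (Fin 2) (Fin 2) ℝ := fun t => ![F t, H t, B t]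
  have hΦ : ∀ t a i j, HasDerivAt (fun s => Φ s a i j)
      ((∑ b, systemMatrix μ t a b • Φ t b) i j) t := by
    intro t a i j
    fin_cases a
    · exact (hF t i j).congr_deriv (by simp [Φ, systemMatrix, Fin.sum_univ_three])
    · exact (hH t i j).congr_deriv (by simp [Φ, systemMatrix, Fin.sum_univ_three]; ring)
    · exact (hB t i j).congr_deriv (by simp [Φ, systemMatrix, Fin.sum_univ_three]; ring)
  have htrace := traceVec_eq_zero_of_hasDerivAt (continuous_systemMatrix hμ) hΦ (by
    funext a
    fin_cases a <;> simp [traceVec, Φ, hF0, hH0, hB0, M1, M2, M3, trace_fin_two])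
  have hgram := traceGram_eq_of_hasDerivAt (continuous_systemMatrix hμ) hΦ
    (hasDerivAt_gramSolution μ) (by
      ext a b
      fin_cases a <;> fin_cases b <;>
        simp [traceGram, gramSolution, Φ, hF0, hH0, hB0, M1, M2, M3, trace_fin_two, mul_apply,
          Fin.sum_univ_two] <;> norm_num)
  intro t
  exact ⟨mul_self_eq_smul_one_of_trace_eq_zero (congrFun (htrace t) 1)
      ((congrFun₂ (hgram t) 1 1).trans (by simp [gramSolution])),
    mul_self_eq_smul_one_of_trace_eq_zero (congrFun (htrace t) 2)
      ((congrFun₂ (hgram t) 2 2).trans (by simp [gramSolution]))⟩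
end

section
/- For i = 1, 2, 3 let fᵢ, hᵢ, bᵢ : ℝ → ℝ be differentiable functions satisfying fᵢ' = 2hᵢ, hᵢ' = 2λ²fᵢ − 2hᵢ − μ·bᵢ, bᵢ' = μ·hᵢ − 2bᵢ, with initial values f₁(0)=0, h₁(0)=0, b₁(0)=1; f₂(0)=1, h₂(0)=0, b₂(0)=0; f₃(0)=0, h₃(0)=−1, b₃(0)=0. Then (f₂(t) + f₃(t))·(f₂(t) − f₃(t)) = 1 + f₁(t)² for every t ∈ ℝ. -/
open Matrix

def IsSolution (μ f h b : ℝ → ℝ) : Prop :=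
  ∀ t, HasDerivAt f (2 * h t) t ∧
    HasDerivAt h (2 * lam t ^ 2 * f t - 2 * h t - μ t * b t) t ∧
    HasDerivAt b (μ t * h t - 2 * b t) t

lemma lam_sq_mul_exp (t : ℝ) : lam t ^ 2 * Real.exp (4 * t) = 1 := by
  rw [lam, ← Real.exp_nat_mul, ← Real.exp_add, ← Real.exp_zero]
  ring_nf

theorem IsSolution.weighted_pairing_eq {μ f h b g k c : ℝ → ℝ} (hx : IsSolution μ f h b)
    (hy : IsSolution μ g k c) (t : ℝ) :
    f t * g t - Real.exp (4 * t) * (h t * k t + b t * c t) =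
      f 0 * g 0 - (h 0 * k 0 + b 0 * c 0) := by
  set F : ℝ → ℝ := fun s => f s * g s - Real.exp (4 * s) * (h s * k s + b s * c s)
  have hF : ∀ s, HasDerivAt F 0 s := fun s => by
    obtain ⟨hf, hh, hb⟩ := hx s
    obtain ⟨hg, hk, hc⟩ := hy s
    have hexp : HasDerivAt (fun s => Real.exp (4 * s)) (Real.exp (4 * s) * 4) s := by
      simpa using ((hasDerivAt_id s).const_mul (4 : ℝ)).exp
    refine ((hf.mul hg).sub (hexp.mul ((hh.mul hk).add (hb.mul hc)))).congr_deriv ?_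
    simp only [Pi.add_apply, Pi.mul_apply]
    linear_combination -2 * (f s * k s + h s * g s) * lam_sq_mul_exp s
  have := is_const_of_deriv_eq_zero (fun s => (hF s).differentiableAt)
    (fun s => (hF s).deriv) t 0
  simpa [F] using this

theorem Matrix.mul_mul_transpose_mul_eq_one {n R : Type*} [Fintype n] [DecidableEq n]
    [CommRing R] {X W J : Matrix n n R} (hJ : J * J = 1) (h : Xᵀ * W * X = J) :
    X * J * Xᵀ * W = 1 := by
  have : J * Xᵀ * W * X = 1 := by
    calc J * Xᵀ * W * X = J * (Xᵀ * W * X) := by simp only [Matrix.mul_assoc]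
      _ = 1 := by rw [h, hJ]
  simpa only [Matrix.mul_assoc] using mul_eq_one_comm.mp this

theorem stmt_6_general (μ : ℝ → ℝ)
    (f₁ f₂ f₃ h₁ h₂ h₃ b₁ b₂ b₃ : ℝ → ℝ)
    (hf₁ : ∀ t, HasDerivAt f₁ (2 * h₁ t) t)
    (hf₂ : ∀ t, HasDerivAt f₂ (2 * h₂ t) t)
    (hf₃ : ∀ t, HasDerivAt f₃ (2 * h₃ t) t)
    (hh₁ : ∀ t, HasDerivAt h₁ (2 * (lam t) ^ 2 * f₁ t - 2 * h₁ t - μ t * b₁ t) t)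
    (hh₂ : ∀ t, HasDerivAt h₂ (2 * (lam t) ^ 2 * f₂ t - 2 * h₂ t - μ t * b₂ t) t)
    (hh₃ : ∀ t, HasDerivAt h₃ (2 * (lam t) ^ 2 * f₃ t - 2 * h₃ t - μ t * b₃ t) t)
    (hb₁ : ∀ t, HasDerivAt b₁ (μ t * h₁ t - 2 * b₁ t) t)
    (hb₂ : ∀ t, HasDerivAt b₂ (μ t * h₂ t - 2 * b₂ t) t)
    (hb₃ : ∀ t, HasDerivAt b₃ (μ t * h₃ t - 2 * b₃ t) t)
    (hf₁0 : f₁ 0 = 0) (hh₁0 : h₁ 0 = 0) (hb₁0 : b₁ 0 = 1)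
    (hf₂0 : f₂ 0 = 1) (hh₂0 : h₂ 0 = 0) (hb₂0 : b₂ 0 = 0)
    (hf₃0 : f₃ 0 = 0) (hh₃0 : h₃ 0 = -1) (hb₃0 : b₃ 0 = 0) :
    ∀ t : ℝ, (f₂ t + f₃ t) * (f₂ t - f₃ t) = 1 + (f₁ t) ^ 2 := by
  intro t
  set f := ![f₁, f₂, f₃]
  set h := ![h₁, h₂, h₃]
  set b := ![b₁, b₂, b₃]
  have sol : ∀ i, IsSolution μ (f i) (h i) (b i) := by
    intro i
    fin_cases i
    exacts [fun t => ⟨hf₁ t, hh₁ t, hb₁ t⟩, fun t => ⟨hf₂ t, hh₂ t, hb₂ t⟩,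
      fun t => ⟨hf₃ t, hh₃ t, hb₃ t⟩]
  set J : Matrix (Fin 3) (Fin 3) ℝ := diagonal ![-1, 1, -1]
  set X : Matrix (Fin 3) (Fin 3) ℝ := of fun r i => ![f i t, h i t, b i t] r
  set W : Matrix (Fin 3) (Fin 3) ℝ := diagonal ![1, -Real.exp (4 * t), -Real.exp (4 * t)]
  have hJ : J * J = 1 := by
    rw [diagonal_mul_diagonal, ← diagonal_one]
    congr 1
    ext i; fin_cases i <;> simp
  have hpair : ∀ i j,
      f i t * f j t - Real.exp (4 * t) * (h i t * h j t + b i t * b j t) = J i j := by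
    intro i j
    rw [(sol i).weighted_pairing_eq (sol j) t]
    fin_cases i <;> fin_cases j <;> simp [f, h, b, J, *]
  have hgram : Xᵀ * W * X = J := by
    ext i j
    rw [← hpair]
    simp only [X, W, mul_apply, transpose_apply, of_apply, Fin.sum_univ_three, cons_val_zero,
      cons_val_one, cons_val, diagonal_apply_eq, ne_eq, Fin.reduceEq, not_false_eq_true,
      diagonal_apply_ne]
    ring
  have key := congrFun (congrFun (mul_mul_transpose_mul_eq_one hJ hgram) 0) 0
  simp only [J, X, W, f, h, b, mul_apply, transpose_apply, of_apply, Fin.sum_univ_three,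
    cons_val_zero, cons_val_one, cons_val, diagonal_apply_eq, ne_eq, Fin.reduceEq,
    not_false_eq_true, diagonal_apply_ne, one_apply_eq] at key
  linear_combination key

theorem stmt_6 (μ : ℝ → ℝ) (hμ : Continuous μ)
    (f₁ f₂ f₃ h₁ h₂ h₃ b₁ b₂ b₃ : ℝ → ℝ)
    (hf₁ : ∀ t, HasDerivAt f₁ (2 * h₁ t) t)
    (hf₂ : ∀ t, HasDerivAt f₂ (2 * h₂ t) t)
    (hf₃ : ∀ t, HasDerivAt f₃ (2 * h₃ t) t)
    (hh₁ : ∀ t, HasDerivAt h₁ (2 * (lam t) ^ 2 * f₁ t - 2 * h₁ t - μ t * b₁ t) t)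
    (hh₂ : ∀ t, HasDerivAt h₂ (2 * (lam t) ^ 2 * f₂ t - 2 * h₂ t - μ t * b₂ t) t)
    (hh₃ : ∀ t, HasDerivAt h₃ (2 * (lam t) ^ 2 * f₃ t - 2 * h₃ t - μ t * b₃ t) t)
    (hb₁ : ∀ t, HasDerivAt b₁ (μ t * h₁ t - 2 * b₁ t) t)
    (hb₂ : ∀ t, HasDerivAt b₂ (μ t * h₂ t - 2 * b₂ t) t)
    (hb₃ : ∀ t, HasDerivAt b₃ (μ t * h₃ t - 2 * b₃ t) t)
    (hf₁0 : f₁ 0 = 0) (hh₁0 : h₁ 0 = 0) (hb₁0 : b₁ 0 = 1)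
    (hf₂0 : f₂ 0 = 1) (hh₂0 : h₂ 0 = 0) (hb₂0 : b₂ 0 = 0)
    (hf₃0 : f₃ 0 = 0) (hh₃0 : h₃ 0 = -1) (hb₃0 : b₃ 0 = 0) :
    ∀ t : ℝ, (f₂ t + f₃ t) * (f₂ t - f₃ t) = 1 + (f₁ t) ^ 2 :=
  stmt_6_general μ f₁ f₂ f₃ h₁ h₂ h₃ b₁ b₂ b₃ hf₁ hf₂ hf₃ hh₁ hh₂ hh₃ hb₁ hb₂ hb₃ hf₁0 hh₁0 hb₁0
    hf₂0 hh₂0 hb₂0 hf₃0 hh₃0 hb₃0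
end

section
/- For i = 1, 2, 3 let fᵢ, hᵢ, bᵢ : ℝ → ℝ be differentiable functions satisfying fᵢ' = 2hᵢ, hᵢ' = 2λ²fᵢ − 2hᵢ − μ·bᵢ, bᵢ' = μ·hᵢ − 2bᵢ, with initial values f₁(0)=0, h₁(0)=0, b₁(0)=1; f₂(0)=1, h₂(0)=0, b₂(0)=0; f₃(0)=0, h₃(0)=−1, b₃(0)=0. Then f₂(t) + f₃(t) > 0 and f₂(t) − f₃(t) > 0 for every t ∈ ℝ. -/
/-!
Along any solution, `D = h² + b² - λ² f²` satisfies `D' = -4 D`, so the initial condition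
`h(0)² + b(0)² = f(0)²` forces `h² + b² = λ² f²` for all time. In particular `|h| ≤ λ |f|`, hence
`|(f²)'| = 4 |f h| ≤ 4 λ f²`. Since `4 λ = (-2 λ)'`, the functions `e^{∓2λ} f²` are monotone in
opposite directions, so `f²` cannot vanish, and `f` keeps the sign of `f(0)`. The two combinations
`f₂ ± f₃` of the theorem solve the same linear system and satisfy these initial conditions.
-/

open Real

lemma hasDerivAt_lam (t : ℝ) : HasDerivAt lam (-2 * lam t) t := by
  have := ((hasDerivAt_id t).const_mul (-2 : ℝ)).exp
  simp only [id, mul_one] at this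
  exact this.congr_deriv (mul_comm _ _)

lemma lam_pos (t : ℝ) : 0 < lam t := exp_pos _

lemma lam_zero : lam 0 = 1 := by simp [lam]

lemma eq_zero_of_hasDerivAt_eq_const_mul {D : ℝ → ℝ} {c : ℝ}
    (hD : ∀ t, HasDerivAt D (c * D t) t) (h0 : D 0 = 0) (t : ℝ) : D t = 0 := by
  have hu : ∀ s, HasDerivAt (fun s => exp (-c * s) * D s) 0 s := fun s => by
    have he : HasDerivAt (fun s => exp (-c * s)) (exp (-c * s) * -c) s := by
      simpa [mul_comm] using ((hasDerivAt_id s).const_mul (-c)).exp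
    exact (he.fun_mul (hD s)).congr_deriv (by ring)
  have hconst := is_const_of_deriv_eq_zero (fun s => (hu s).differentiableAt)
    (fun s => (hu s).deriv) t 0
  simpa [h0, (exp_pos _).ne'] using hconst

/-- Grönwall in both time directions: `e^P g` is nondecreasing and `e^{-P} g` nonincreasing. -/
lemma pos_of_abs_deriv_le_mul {g g' P p : ℝ → ℝ} (hg : ∀ t, HasDerivAt g (g' t) t)
    (hP : ∀ t, HasDerivAt P (p t) t) (hbound : ∀ t, |g' t| ≤ p t * g t) (h0 : 0 < g 0)
    (t : ℝ) : 0 < g t := by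
  have hup : Monotone fun s => exp (P s) * g s := by
    refine monotone_of_hasDerivAt_nonneg (fun s => ((hP s).exp.mul (hg s))) fun s => ?_
    have : 0 ≤ p s * g s + g' s := by linarith [neg_abs_le (g' s), hbound s]
    simp only [Pi.zero_apply]
    nlinarith [exp_pos (P s)]
  have hdown : Antitone fun s => exp (-P s) * g s := by
    refine antitone_of_hasDerivAt_nonpos (fun s => ((hP s).neg.exp.mul (hg s))) fun s => ?_
    have : g' s - p s * g s ≤ 0 := by linarith [le_abs_self (g' s), hbound s]
    simp only [Pi.zero_apply, Pi.neg_apply]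
    nlinarith [exp_pos (-P s)]
  rcases le_total 0 t with ht | ht
  · exact pos_of_mul_pos_right ((mul_pos (exp_pos _) h0).trans_le (hup ht)) (exp_pos _).le
  · exact pos_of_mul_pos_right ((mul_pos (exp_pos _) h0).trans_le (hdown ht)) (exp_pos _).le

lemma pos_of_continuous_of_ne_zero {F : ℝ → ℝ} (hF : Continuous F) (hne : ∀ t, F t ≠ 0)
    (h0 : 0 < F 0) (t : ℝ) : 0 < F t := by
  by_contra! ht
  obtain ⟨s, hs⟩ := intermediate_value_univ t 0 hF ⟨ht, h0.le⟩
  exact hne s hs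

structure IsSolution_s7 (μ F H B : ℝ → ℝ) : Prop where
  hasDerivAt_F : ∀ t, HasDerivAt F (2 * H t) t
  hasDerivAt_H : ∀ t, HasDerivAt H (2 * lam t ^ 2 * F t - 2 * H t - μ t * B t) t
  hasDerivAt_B : ∀ t, HasDerivAt B (μ t * H t - 2 * B t) t

namespace IsSolution_s7

variable {μ F H B F' H' B' : ℝ → ℝ}

lemma add (s : IsSolution_s7 μ F H B) (s' : IsSolution_s7 μ F' H' B') :
    IsSolution_s7 μ (F + F') (H + H') (B + B') where
  hasDerivAt_F t :=
    ((s.hasDerivAt_F t).add (s'.hasDerivAt_F t)).congr_deriv (by simp only [Pi.add_apply]; ring)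
  hasDerivAt_H t :=
    ((s.hasDerivAt_H t).add (s'.hasDerivAt_H t)).congr_deriv (by simp only [Pi.add_apply]; ring)
  hasDerivAt_B t :=
    ((s.hasDerivAt_B t).add (s'.hasDerivAt_B t)).congr_deriv (by simp only [Pi.add_apply]; ring)

lemma sub (s : IsSolution_s7 μ F H B) (s' : IsSolution_s7 μ F' H' B') :
    IsSolution_s7 μ (F - F') (H - H') (B - B') where
  hasDerivAt_F t :=
    ((s.hasDerivAt_F t).sub (s'.hasDerivAt_F t)).congr_deriv (by simp only [Pi.sub_apply]; ring)
  hasDerivAt_H t :=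
    ((s.hasDerivAt_H t).sub (s'.hasDerivAt_H t)).congr_deriv (by simp only [Pi.sub_apply]; ring)
  hasDerivAt_B t :=
    ((s.hasDerivAt_B t).sub (s'.hasDerivAt_B t)).congr_deriv (by simp only [Pi.sub_apply]; ring)

lemma sq_add_sq_eq_lam_sq_mul_sq (s : IsSolution_s7 μ F H B)
    (h0 : H 0 ^ 2 + B 0 ^ 2 = F 0 ^ 2) (t : ℝ) : H t ^ 2 + B t ^ 2 = lam t ^ 2 * F t ^ 2 := by
  have hD : ∀ t, HasDerivAt (fun t => H t ^ 2 + B t ^ 2 - lam t ^ 2 * F t ^ 2)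
      (-4 * (H t ^ 2 + B t ^ 2 - lam t ^ 2 * F t ^ 2)) t := fun t => by
    refine ((((s.hasDerivAt_H t).fun_pow 2).fun_add ((s.hasDerivAt_B t).fun_pow 2)).fun_sub
      (((hasDerivAt_lam t).fun_pow 2).fun_mul ((s.hasDerivAt_F t).fun_pow 2))).congr_deriv ?_
    simp only [Nat.cast_ofNat, Nat.add_one_sub_one, pow_one]
    ring
  have := eq_zero_of_hasDerivAt_eq_const_mul hD (by simp [lam_zero, h0]) t
  linarith

lemma pos (s : IsSolution_s7 μ F H B) (hF0 : 0 < F 0) (h0 : H 0 ^ 2 + B 0 ^ 2 = F 0 ^ 2)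
    (t : ℝ) : 0 < F t := by
  have hH : ∀ t, |H t| ≤ lam t * |F t| := fun t => by
    rw [← abs_of_pos (lam_pos t), ← abs_mul, ← sq_le_sq, mul_pow]
    linarith [s.sq_add_sq_eq_lam_sq_mul_sq h0 t, sq_nonneg (B t)]
  have hsq : ∀ t, 0 < F t ^ 2 := pos_of_abs_deriv_le_mul (fun t => (s.hasDerivAt_F t).fun_pow 2)
    (fun t => (hasDerivAt_lam t).const_mul (-2)) (fun t => by
      calc |(2 : ℕ) * F t ^ (2 - 1) * (2 * H t)| = 4 * |F t| * |H t| := by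
            simp only [Nat.cast_ofNat, Nat.add_one_sub_one, pow_one, abs_mul, abs_two]; ring
        _ ≤ 4 * |F t| * (lam t * |F t|) := by gcongr; exact hH t
        _ = -2 * (-2 * lam t) * F t ^ 2 := by rw [← sq_abs (F t)]; ring)
    (pow_pos hF0 2)
  exact pos_of_continuous_of_ne_zero (continuous_iff_continuousAt.2 fun t =>
    (s.hasDerivAt_F t).continuousAt) (fun t ht => by simpa [ht] using hsq t) hF0 t

end IsSolution_s7

theorem stmt_7_general (μ : ℝ → ℝ)
    (f₂ f₃ h₂ h₃ b₂ b₃ : ℝ → ℝ)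
    (hf₂ : ∀ t, HasDerivAt f₂ (2 * h₂ t) t)
    (hf₃ : ∀ t, HasDerivAt f₃ (2 * h₃ t) t)
    (hh₂ : ∀ t, HasDerivAt h₂ (2 * (lam t) ^ 2 * f₂ t - 2 * h₂ t - μ t * b₂ t) t)
    (hh₃ : ∀ t, HasDerivAt h₃ (2 * (lam t) ^ 2 * f₃ t - 2 * h₃ t - μ t * b₃ t) t)
    (hb₂ : ∀ t, HasDerivAt b₂ (μ t * h₂ t - 2 * b₂ t) t)
    (hb₃ : ∀ t, HasDerivAt b₃ (μ t * h₃ t - 2 * b₃ t) t)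
    (hf₂0 : f₂ 0 = 1) (hh₂0 : h₂ 0 = 0) (hb₂0 : b₂ 0 = 0)
    (hf₃0 : f₃ 0 = 0) (hh₃0 : h₃ 0 = -1) (hb₃0 : b₃ 0 = 0) :
    ∀ t : ℝ, 0 < f₂ t + f₃ t ∧ 0 < f₂ t - f₃ t := by
  have s₂ : IsSolution_s7 μ f₂ h₂ b₂ := ⟨hf₂, hh₂, hb₂⟩
  have s₃ : IsSolution_s7 μ f₃ h₃ b₃ := ⟨hf₃, hh₃, hb₃⟩
  refine fun t => ⟨(s₂.add s₃).pos ?_ ?_ t, (s₂.sub s₃).pos ?_ ?_ t⟩ <;>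
    simp [hf₂0, hf₃0, hh₂0, hh₃0, hb₂0, hb₃0]

theorem stmt_7 (μ : ℝ → ℝ) (hμ : Continuous μ)
    (f₁ f₂ f₃ h₁ h₂ h₃ b₁ b₂ b₃ : ℝ → ℝ)
    (hf₁ : ∀ t, HasDerivAt f₁ (2 * h₁ t) t)
    (hf₂ : ∀ t, HasDerivAt f₂ (2 * h₂ t) t)
    (hf₃ : ∀ t, HasDerivAt f₃ (2 * h₃ t) t)
    (hh₁ : ∀ t, HasDerivAt h₁ (2 * (lam t) ^ 2 * f₁ t - 2 * h₁ t - μ t * b₁ t) t)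
    (hh₂ : ∀ t, HasDerivAt h₂ (2 * (lam t) ^ 2 * f₂ t - 2 * h₂ t - μ t * b₂ t) t)
    (hh₃ : ∀ t, HasDerivAt h₃ (2 * (lam t) ^ 2 * f₃ t - 2 * h₃ t - μ t * b₃ t) t)
    (hb₁ : ∀ t, HasDerivAt b₁ (μ t * h₁ t - 2 * b₁ t) t)
    (hb₂ : ∀ t, HasDerivAt b₂ (μ t * h₂ t - 2 * b₂ t) t)
    (hb₃ : ∀ t, HasDerivAt b₃ (μ t * h₃ t - 2 * b₃ t) t)
    (hf₁0 : f₁ 0 = 0) (hh₁0 : h₁ 0 = 0) (hb₁0 : b₁ 0 = 1)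
    (hf₂0 : f₂ 0 = 1) (hh₂0 : h₂ 0 = 0) (hb₂0 : b₂ 0 = 0)
    (hf₃0 : f₃ 0 = 0) (hh₃0 : h₃ 0 = -1) (hb₃0 : b₃ 0 = 0) :
    ∀ t : ℝ, 0 < f₂ t + f₃ t ∧ 0 < f₂ t - f₃ t :=
  stmt_7_general μ f₂ f₃ h₂ h₃ b₂ b₃ hf₂ hf₃ hh₂ hh₃ hb₂ hb₃ hf₂0 hh₂0 hb₂0 hf₃0 hh₃0 hb₃0
end

section
/- For i = 1, 2, 3 let fᵢ, hᵢ, bᵢ : ℝ → ℝ be differentiable functions satisfying fᵢ' = 2hᵢ, hᵢ' = 2λ²fᵢ − 2hᵢ − μ·bᵢ, bᵢ' = μ·hᵢ − 2bᵢ, with initial values f₁(0)=0, h₁(0)=0, b₁(0)=1; f₂(0)=1, h₂(0)=0, b₂(0)=0; f₃(0)=0, h₃(0)=−1, b₃(0)=0. Define G(t) = !![f₂(t) − f₃(t), f₁(t); f₁(t), f₂(t) + f₃(t)]. Then G(t) = −M₂·(f₁(t)M₁ + f₂(t)M₂ + f₃(t)M₃), G(t) is a symmetric positive definite matrix for every t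 ∈ ℝ, and G(0) = I₂. -/
/-!
The rescaled vectors `uᵢ = (fᵢ, e^{2t} hᵢ, e^{2t} bᵢ)` solve `u' = A(t) u` with
`A(t) = [[0, 2e^{-2t}, 0], [2e^{-2t}, 0, -μ], [0, μ, 0]]`, which is skew for the Minkowski form
`J = diag(1, -1, -1)`. Hence the Gram matrix `Wᵀ J W` of the frame `W = (u₁ u₂ u₃)` is conserved,
and at `t = 0` it is `diag(-1, 1, -1)`. Such a `W` also satisfies `W diag(-1, 1, -1) Wᵀ = J`, whose
top-left entry is `f₂² - f₁² - f₃² = 1`. So `f₂` never vanishes, stays positive, and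
`(f₁, f₂, f₃)` lies on the upper sheet of the hyperboloid: `G` has determinant `1` and positive
trace.
-/

open Matrix

lemma neg_M2_mul_smul_M1_add_smul_M2_add_smul_M3 (a b c : ℝ) :
    -(M2 * (a • M1 + b • M2 + c • M3)) = !![b - c, a; a, b + c] := by
  ext i j
  fin_cases i <;> fin_cases j <;> simp [M1, M2, M3]; ring

lemma posDef_of_sq_sub_sq_sub_sq_eq_one {x y z : ℝ} (hy : 0 < y) (h : y ^ 2 - x ^ 2 - z ^ 2 = 1) :
    (!![y - z, x; x, y + z] : Matrix (Fin 2) (Fin 2) ℝ).PosDef := by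
  have hyz : 0 < y - z := by nlinarith [sq_nonneg x, sq_nonneg (y + z)]
  refine .of_dotProduct_mulVec_pos ?_ fun v hv => ?_
  · rw [isHermitian_iff_isSymm]
    ext i j
    fin_cases i <;> fin_cases j <;> rfl
  have hv' : v 0 ≠ 0 ∨ v 1 ≠ 0 := by
    by_contra! hv0
    exact hv (funext fun i => by fin_cases i <;> simp [hv0.1, hv0.2])
  simp only [star_trivial, dotProduct, mulVec, Fin.sum_univ_two, of_apply, cons_val', cons_val_zero,
    cons_val_one, empty_val', cons_val_fin_one]
  have hsum_pos : 0 < ((y - z) * v 0 + x * v 1) ^ 2 + v 1 ^ 2 := by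
    rcases hv' with h0 | h1
    · by_cases h1 : v 1 = 0
      · simp only [h1, mul_zero, add_zero]
        positivity
      · positivity
    · positivity
  -- completing the square, using `(y - z) * (y + z) - x ^ 2 = 1`
  refine pos_of_mul_pos_right (a := y - z) ?_ hyz.le
  linear_combination hsum_pos - v 1 ^ 2 * h

lemma pos_of_continuous_of_ne_zero_s8 {X α : Type*} [TopologicalSpace X] [PreconnectedSpace X]
    [LinearOrder α] [TopologicalSpace α] [OrderClosedTopology α] [Zero α] {f : X → α}
    (hf : Continuous f) (hne : ∀ x, f x ≠ 0) {a : X} (ha : 0 < f a) (x : X) : 0 < f x := by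
  by_contra! hx
  obtain ⟨y, hy⟩ := intermediate_value_univ x a hf ⟨hx, ha.le⟩
  exact hne y hy

theorem Matrix.mul_mul_transpose_eq_of_transpose_mul_mul_eq {n R : Type*} [Fintype n]
    [DecidableEq n] [CommRing R] {W J C : Matrix n n R} (hJ : J * J = 1) (hC : C * C = 1)
    (h : Wᵀ * J * W = C) : W * C * Wᵀ = J := by
  have hleft : C * Wᵀ * J * W = 1 := by
    simp only [Matrix.mul_assoc] at h ⊢
    rw [h, hC]
  have hright : W * (C * Wᵀ * J) = 1 := mul_eq_one_comm.mp hleft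
  calc W * C * Wᵀ = W * (C * Wᵀ * J) * J := by simp only [Matrix.mul_assoc, hJ, Matrix.mul_one]
    _ = J := by rw [hright, Matrix.one_mul]

structure IsSolution_s8 (μ f h b : ℝ → ℝ) : Prop where
  hasDerivAt_f : ∀ t, HasDerivAt f (2 * h t) t
  hasDerivAt_h : ∀ t, HasDerivAt h (2 * lam t ^ 2 * f t - 2 * h t - μ t * b t) t
  hasDerivAt_b : ∀ t, HasDerivAt b (μ t * h t - 2 * b t) t

lemma exp_mul_lam_sq (t : ℝ) : Real.exp (4 * t) * lam t ^ 2 = 1 := by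
  rw [lam, ← Real.exp_nat_mul, ← Real.exp_add, ← Real.exp_zero]
  ring_nf

theorem IsSolution_s8.pairing_eq {μ f h b f' h' b' : ℝ → ℝ} (hs : IsSolution_s8 μ f h b)
    (hs' : IsSolution_s8 μ f' h' b') (t : ℝ) :
    f t * f' t - Real.exp (4 * t) * (h t * h' t + b t * b' t)
      = f 0 * f' 0 - (h 0 * h' 0 + b 0 * b' 0) := by
  set g : ℝ → ℝ := fun s => f s * f' s - Real.exp (4 * s) * (h s * h' s + b s * b' s)
  have hg : ∀ s, HasDerivAt g 0 s := by
    intro s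
    have hexp : HasDerivAt (fun s => Real.exp (4 * s)) (Real.exp (4 * s) * 4) s := by
      simpa using ((hasDerivAt_id s).const_mul 4).exp
    refine (((hs.hasDerivAt_f s).mul (hs'.hasDerivAt_f s)).sub (hexp.mul
      (((hs.hasDerivAt_h s).mul (hs'.hasDerivAt_h s)).add
        ((hs.hasDerivAt_b s).mul (hs'.hasDerivAt_b s))))).congr_deriv ?_
    simp only [Pi.add_apply, Pi.mul_apply]
    linear_combination (-2) * (f s * h' s + h s * f' s) * exp_mul_lam_sq s
  simpa [g] using is_const_of_deriv_eq_zero (fun s => (hg s).differentiableAt)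
    (fun s => (hg s).deriv) t 0

noncomputable def frame {ι : Type*} (f h b : ι → ℝ → ℝ) (t : ℝ) : Matrix (Fin 3) ι ℝ :=
  of ![fun i => f i t, fun i => Real.exp (2 * t) * h i t, fun i => Real.exp (2 * t) * b i t]

def minkowski : Matrix (Fin 3) (Fin 3) ℝ := diagonal ![1, -1, -1]

lemma sq_sub_sq_sub_sq_eq_one_of_transpose_mul_minkowski_mul {W : Matrix (Fin 3) (Fin 3) ℝ}
    (hW : Wᵀ * minkowski * W = diagonal ![-1, 1, -1]) : W 0 1 ^ 2 - W 0 0 ^ 2 - W 0 2 ^ 2 = 1 := by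
  have hrows := congrFun₂ (mul_mul_transpose_eq_of_transpose_mul_mul_eq
    (by ext i j; fin_cases i <;> fin_cases j <;> simp [minkowski])
    (by ext i j; fin_cases i <;> fin_cases j <;> simp) hW) 0 0
  simp [minkowski, mul_apply, Fin.sum_univ_three] at hrows
  linear_combination hrows

theorem transpose_frame_mul_minkowski_mul_frame {ι : Type*} {μ : ℝ → ℝ} {f h b : ι → ℝ → ℝ}
    (hs : ∀ i, IsSolution_s8 μ (f i) (h i) (b i)) (t : ℝ) :
    (frame f h b t)ᵀ * minkowski * frame f h b t
      = (frame f h b 0)ᵀ * minkowski * frame f h b 0 := by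
  ext i j
  have hexp : Real.exp (2 * t) ^ 2 = Real.exp (4 * t) := by
    rw [← Real.exp_nat_mul]; ring_nf
  simp [frame, minkowski, mul_apply, Fin.sum_univ_three]
  linear_combination (hs i).pairing_eq (hs j) t
    - (h i t * h j t + b i t * b j t) * hexp

theorem stmt_8_general (μ : ℝ → ℝ)
    (f₁ f₂ f₃ h₁ h₂ h₃ b₁ b₂ b₃ : ℝ → ℝ)
    (hf₁ : ∀ t, HasDerivAt f₁ (2 * h₁ t) t)
    (hf₂ : ∀ t, HasDerivAt f₂ (2 * h₂ t) t)
    (hf₃ : ∀ t, HasDerivAt f₃ (2 * h₃ t) t)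
    (hh₁ : ∀ t, HasDerivAt h₁ (2 * (lam t) ^ 2 * f₁ t - 2 * h₁ t - μ t * b₁ t) t)
    (hh₂ : ∀ t, HasDerivAt h₂ (2 * (lam t) ^ 2 * f₂ t - 2 * h₂ t - μ t * b₂ t) t)
    (hh₃ : ∀ t, HasDerivAt h₃ (2 * (lam t) ^ 2 * f₃ t - 2 * h₃ t - μ t * b₃ t) t)
    (hb₁ : ∀ t, HasDerivAt b₁ (μ t * h₁ t - 2 * b₁ t) t)
    (hb₂ : ∀ t, HasDerivAt b₂ (μ t * h₂ t - 2 * b₂ t) t)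
    (hb₃ : ∀ t, HasDerivAt b₃ (μ t * h₃ t - 2 * b₃ t) t)
    (hf₁0 : f₁ 0 = 0) (hh₁0 : h₁ 0 = 0) (hb₁0 : b₁ 0 = 1)
    (hf₂0 : f₂ 0 = 1) (hh₂0 : h₂ 0 = 0) (hb₂0 : b₂ 0 = 0)
    (hf₃0 : f₃ 0 = 0) (hh₃0 : h₃ 0 = -1) (hb₃0 : b₃ 0 = 0) :
    (∀ t : ℝ, !![f₂ t - f₃ t, f₁ t; f₁ t, f₂ t + f₃ t]
        = -(M2 * (f₁ t • M1 + f₂ t • M2 + f₃ t • M3))) ∧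
    (∀ t : ℝ, (!![f₂ t - f₃ t, f₁ t; f₁ t, f₂ t + f₃ t] : Matrix (Fin 2) (Fin 2) ℝ).IsSymm) ∧
    (∀ t : ℝ, (!![f₂ t - f₃ t, f₁ t; f₁ t, f₂ t + f₃ t] : Matrix (Fin 2) (Fin 2) ℝ).PosDef) ∧
    !![f₂ 0 - f₃ 0, f₁ 0; f₁ 0, f₂ 0 + f₃ 0] = (1 : Matrix (Fin 2) (Fin 2) ℝ) := by
  have hs : ∀ i, IsSolution_s8 μ (![f₁, f₂, f₃] i) (![h₁, h₂, h₃] i) (![b₁, b₂, b₃] i) := by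
    intro i
    fin_cases i
    exacts [⟨hf₁, hh₁, hb₁⟩, ⟨hf₂, hh₂, hb₂⟩, ⟨hf₃, hh₃, hb₃⟩]
  have hyperboloid (t : ℝ) : f₂ t ^ 2 - f₁ t ^ 2 - f₃ t ^ 2 = 1 := by
    have hgram : (frame ![f₁, f₂, f₃] ![h₁, h₂, h₃] ![b₁, b₂, b₃] t)ᵀ * minkowski
        * frame ![f₁, f₂, f₃] ![h₁, h₂, h₃] ![b₁, b₂, b₃] t = diagonal ![-1, 1, -1] := by
      rw [transpose_frame_mul_minkowski_mul_frame hs]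
      ext i j
      fin_cases i <;> fin_cases j <;>
        simp [frame, minkowski, mul_apply, Fin.sum_univ_three, hf₁0, hh₁0, hb₁0, hf₂0, hh₂0,
          hb₂0, hf₃0, hh₃0, hb₃0]
    simpa [frame] using sq_sub_sq_sub_sq_eq_one_of_transpose_mul_minkowski_mul hgram
  have hf₂_pos : ∀ t, 0 < f₂ t :=
    pos_of_continuous_of_ne_zero_s8 (continuous_iff_continuousAt.2 fun t => (hf₂ t).continuousAt)
      (fun t h0 => by nlinarith [hyperboloid t]) (hf₂0 ▸ one_pos : 0 < f₂ 0)
  have hG (t : ℝ) := posDef_of_sq_sub_sq_sub_sq_eq_one (hf₂_pos t) (hyperboloid t)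
  refine ⟨fun t => (neg_M2_mul_smul_M1_add_smul_M2_add_smul_M3 _ _ _).symm,
    fun t => isHermitian_iff_isSymm.mp (hG t).isHermitian, hG, ?_⟩
  simp [hf₁0, hf₂0, hf₃0, one_fin_two]

theorem stmt_8 (μ : ℝ → ℝ) (hμ : Continuous μ)
    (f₁ f₂ f₃ h₁ h₂ h₃ b₁ b₂ b₃ : ℝ → ℝ)
    (hf₁ : ∀ t, HasDerivAt f₁ (2 * h₁ t) t)
    (hf₂ : ∀ t, HasDerivAt f₂ (2 * h₂ t) t)
    (hf₃ : ∀ t, HasDerivAt f₃ (2 * h₃ t) t)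
    (hh₁ : ∀ t, HasDerivAt h₁ (2 * (lam t) ^ 2 * f₁ t - 2 * h₁ t - μ t * b₁ t) t)
    (hh₂ : ∀ t, HasDerivAt h₂ (2 * (lam t) ^ 2 * f₂ t - 2 * h₂ t - μ t * b₂ t) t)
    (hh₃ : ∀ t, HasDerivAt h₃ (2 * (lam t) ^ 2 * f₃ t - 2 * h₃ t - μ t * b₃ t) t)
    (hb₁ : ∀ t, HasDerivAt b₁ (μ t * h₁ t - 2 * b₁ t) t)
    (hb₂ : ∀ t, HasDerivAt b₂ (μ t * h₂ t - 2 * b₂ t) t)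
    (hb₃ : ∀ t, HasDerivAt b₃ (μ t * h₃ t - 2 * b₃ t) t)
    (hf₁0 : f₁ 0 = 0) (hh₁0 : h₁ 0 = 0) (hb₁0 : b₁ 0 = 1)
    (hf₂0 : f₂ 0 = 1) (hh₂0 : h₂ 0 = 0) (hb₂0 : b₂ 0 = 0)
    (hf₃0 : f₃ 0 = 0) (hh₃0 : h₃ 0 = -1) (hb₃0 : b₃ 0 = 0) :
    (∀ t : ℝ, !![f₂ t - f₃ t, f₁ t; f₁ t, f₂ t + f₃ t]
        = -(M2 * (f₁ t • M1 + f₂ t • M2 + f₃ t • M3))) ∧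
    (∀ t : ℝ, (!![f₂ t - f₃ t, f₁ t; f₁ t, f₂ t + f₃ t] : Matrix (Fin 2) (Fin 2) ℝ).IsSymm) ∧
    (∀ t : ℝ, (!![f₂ t - f₃ t, f₁ t; f₁ t, f₂ t + f₃ t] : Matrix (Fin 2) (Fin 2) ℝ).PosDef) ∧
    !![f₂ 0 - f₃ 0, f₁ 0; f₁ 0, f₂ 0 + f₃ 0] = (1 : Matrix (Fin 2) (Fin 2) ℝ) :=
  stmt_8_general μ f₁ f₂ f₃ h₁ h₂ h₃ b₁ b₂ b₃ hf₁ hf₂ hf₃ hh₁ hh₂ hh₃ hb₁ hb₂ hb₃ hf₁0 hh₁0 hb₁0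
    hf₂0 hh₂0 hb₂0 hf₃0 hh₃0 hb₃0
end
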